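/- arXiv:1512.01775 — 3 statements merged into one kernel-verified Lean document; each statement's English description precedes it below -/
import Mathlib

section
/- Let V ⊂ R^d be a set of n points, let Z₁, …, Z_d be independent Fréchet random variables with shape p ≥ 1, and define f_b(v) = (b v₁ Z₁, …, b v_d Z_d) with b = (3 ln n)^{1/p}. Then with probability at least 1 − 1/n, for all pairs u, w ∈ V we have ‖f_b(u) − f_b(w)‖_∞ ≥ ‖u − w‖_p (the embedding is non-contractive on V). -/
open MeasureTheory ProbabilityTheory Real Finset

theorem frechet_embedding_noncontractive_whp
    {Ω : Type*} [MeasurableSpace Ω] (μ : Measure Ω) [IsProbabilityMeasure μ]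
    (p : ℝ) (hp : 1 ≤ p) (d : ℕ) (hd : 0 < d)
    (V : Finset (Fin d → ℝ)) (n : ℕ) (hn : V.card = n) (hn2 : 2 ≤ n)
    (Z : Fin d → Ω → ℝ) (hZmeas : ∀ i, Measurable (Z i))
    (hindep : iIndepFun Z μ)
    (hcdf : ∀ i, ∀ x : ℝ, 0 < x →
      μ {ω | Z i ω ≤ x} = ENNReal.ofReal (Real.exp (-(x ^ (-p)))))
    (b : ℝ) (hb : b = (3 * Real.log n) ^ (1 / p)) :
    ENNReal.ofReal (1 - 1 / (n : ℝ)) ≤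
      μ {ω | ∀ u ∈ V, ∀ w ∈ V,
        (∑ i, |u i - w i| ^ p) ^ (1 / p) ≤ ⨆ i, |b * u i * Z i ω - b * w i * Z i ω|} := by
  classical
  haveI : Nonempty (Fin d) := Fin.pos_iff_nonempty.mp hd
  have hp0 : (0:ℝ) < p := lt_of_lt_of_le one_pos hp
  have hn0 : (0:ℝ) < n := by positivity
  have hn1 : (1:ℝ) < n := by exact_mod_cast lt_of_lt_of_le one_lt_two hn2
  have hlog : 0 < Real.log n := Real.log_pos hn1
  have hb0 : 0 < b := by rw [hb]; exact Real.rpow_pos_of_pos (by linarith) _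
  have hbp : b ^ p = 3 * Real.log n := by
    rw [hb, ← Real.rpow_mul (by linarith : (0:ℝ) ≤ 3 * Real.log n), one_div,
      inv_mul_cancel₀ hp0.ne', Real.rpow_one]
  -- the bad events
  set bad : (Fin d → ℝ) → (Fin d → ℝ) → Set Ω := fun u w =>
    {ω | ¬ (∑ i, |u i - w i| ^ p) ^ (1 / p) ≤ ⨆ i, |b * u i * Z i ω - b * w i * Z i ω|}
    with hbad
  -- per-pair bound
  have key : ∀ u w : Fin d → ℝ, μ (bad u w) ≤ ENNReal.ofReal ((n:ℝ) ^ (-3 : ℝ)) := by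
    intro u w
    by_cases huw : u = w
    · have : bad u w = ∅ := by
        ext ω
        simp only [hbad, Set.mem_setOf_eq, Set.mem_empty_iff_false, iff_false, not_not, huw]
        have h1 : (∑ i, |w i - w i| ^ p) ^ (1 / p) = 0 := by
          have hs : ∑ i, |w i - w i| ^ p = (0:ℝ) := by simp [Real.zero_rpow hp0.ne']
          rw [hs, one_div, Real.zero_rpow (inv_ne_zero hp0.ne')]
        have h2 : (⨆ i, |b * w i * Z i ω - b * w i * Z i ω|) = 0 := by
          simp
        rw [h1, h2]
      simp [this]
    · obtain ⟨j, hj⟩ : ∃ j, u j - w j ≠ 0 := by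
        by_contra h
        push_neg at h
        exact huw (funext fun i => by have := h i; linarith)
      set c : ℝ := (∑ i, |u i - w i| ^ p) ^ (1 / p) with hc
      have hsum_pos : 0 < ∑ i, |u i - w i| ^ p := by
        have : 0 < |u j - w j| ^ p := Real.rpow_pos_of_pos (abs_pos.mpr hj) _
        refine lt_of_lt_of_le this ?_
        exact Finset.single_le_sum (f := fun i => |u i - w i| ^ p)
          (fun i _ => Real.rpow_nonneg (abs_nonneg _) _) (Finset.mem_univ j)
      have hc0 : 0 < c := Real.rpow_pos_of_pos hsum_pos _
      set S : Finset (Fin d) := Finset.univ.filter (fun i => u i - w i ≠ 0) with hS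
      set x : Fin d → ℝ := fun i => c / (b * |u i - w i|) with hx
      have hxpos : ∀ i ∈ S, 0 < x i := by
        intro i hi
        have : u i - w i ≠ 0 := (Finset.mem_filter.mp hi).2
        exact div_pos hc0 (mul_pos hb0 (abs_pos.mpr this))
      -- bad ⊆ ⋂
      have hsub : bad u w ⊆ ⋂ i ∈ S, {ω | Z i ω ≤ x i} := by
        intro ω hω
        simp only [hbad, Set.mem_setOf_eq, not_le] at hω
        simp only [Set.mem_iInter, Set.mem_setOf_eq]
        intro i hi
        have hvi : u i - w i ≠ 0 := (Finset.mem_filter.mp hi).2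
        have hle : |b * u i * Z i ω - b * w i * Z i ω| ≤
            ⨆ i, |b * u i * Z i ω - b * w i * Z i ω| :=
          le_ciSup (f := fun i => |b * u i * Z i ω - b * w i * Z i ω|)
            (Set.Finite.bddAbove (Set.finite_range _)) i
        have hlt : |b * u i * Z i ω - b * w i * Z i ω| < c := lt_of_le_of_lt hle hω
        have heq : |b * u i * Z i ω - b * w i * Z i ω| = b * |u i - w i| * |Z i ω| := by
          rw [show b * u i * Z i ω - b * w i * Z i ω = (b * (u i - w i)) * Z i ω by ring,
            abs_mul, abs_mul, abs_of_pos hb0]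
        have h1 : b * |u i - w i| * Z i ω < c := by
          calc b * |u i - w i| * Z i ω ≤ b * |u i - w i| * |Z i ω| := by
                have := le_abs_self (Z i ω)
                have hpos : 0 < b * |u i - w i| := mul_pos hb0 (abs_pos.mpr hvi)
                nlinarith
            _ < c := by rw [← heq]; exact hlt
        have hpos : 0 < b * |u i - w i| := mul_pos hb0 (abs_pos.mpr hvi)
        rw [hx]
        exact le_of_lt ((lt_div_iff₀' hpos).mpr (by linarith [h1]))
      -- measure of intersection
      have hmeas : μ (⋂ i ∈ S, {ω | Z i ω ≤ x i}) =
          ∏ i ∈ S, μ {ω | Z i ω ≤ x i} := by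
        refine hindep.meas_biInter (fun i hi => ?_)
        exact ⟨Set.Iic (x i), measurableSet_Iic, rfl⟩
      have hprod : ∏ i ∈ S, μ {ω | Z i ω ≤ x i} =
          ENNReal.ofReal (Real.exp (-(∑ i ∈ S, (x i) ^ (-p)))) := by
        have hcdf' : ∀ i ∈ S, μ {ω | Z i ω ≤ x i}
            = ENNReal.ofReal (Real.exp (-((x i) ^ (-p)))) :=
          fun i hi => hcdf i (x i) (hxpos i hi)
        rw [Finset.prod_congr rfl hcdf',
          ← ENNReal.ofReal_prod_of_nonneg (fun i _ => (Real.exp_pos _).le)]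
        congr 1
        rw [← Real.exp_sum]
        congr 1
        rw [Finset.sum_neg_distrib]
      -- sum computation
      have hsumx : ∑ i ∈ S, (x i) ^ (-p) = 3 * Real.log n := by
        have hcp : c ^ p = ∑ i, |u i - w i| ^ p := by
          rw [hc, ← Real.rpow_mul hsum_pos.le, one_div, inv_mul_cancel₀ hp0.ne',
            Real.rpow_one]
        have hterm : ∀ i ∈ S, (x i) ^ (-p) = b ^ p * |u i - w i| ^ p / c ^ p := by
          intro i hi
          have hvi : u i - w i ≠ 0 := (Finset.mem_filter.mp hi).2
          have habs : 0 < |u i - w i| := abs_pos.mpr hvi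
          rw [hx]
          rw [Real.rpow_neg (by positivity), Real.div_rpow hc0.le (by positivity),
            Real.mul_rpow hb0.le habs.le]
          rw [inv_div]
        rw [Finset.sum_congr rfl hterm, ← Finset.sum_div, ← Finset.mul_sum]
        have hSsum : ∑ i ∈ S, |u i - w i| ^ p = ∑ i, |u i - w i| ^ p := by
          refine Finset.sum_subset (Finset.subset_univ S) (fun i _ hi => ?_)
          have : u i - w i = 0 := by
            by_contra h
            exact hi (Finset.mem_filter.mpr ⟨Finset.mem_univ i, h⟩)
          simp [this, Real.zero_rpow hp0.ne']
        rw [hSsum, ← hcp, mul_div_assoc, div_self (by positivity : c ^ p ≠ 0), mul_one, hbp]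
      rw [hsumx] at hprod
      have hfin : Real.exp (-(3 * Real.log n)) = (n:ℝ) ^ (-3 : ℝ) := by
        rw [Real.rpow_def_of_pos hn0]
        ring_nf
      calc μ (bad u w) ≤ μ (⋂ i ∈ S, {ω | Z i ω ≤ x i}) := measure_mono hsub
        _ = ENNReal.ofReal (Real.exp (-(3 * Real.log n))) := by rw [hmeas, hprod]
        _ = ENNReal.ofReal ((n:ℝ) ^ (-3 : ℝ)) := by rw [hfin]
  -- union bound and final
  set good : Set Ω := {ω | ∀ u ∈ V, ∀ w ∈ V,
      (∑ i, |u i - w i| ^ p) ^ (1 / p) ≤ ⨆ i, |b * u i * Z i ω - b * w i * Z i ω|}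
    with hgood
  have hcompl : goodᶜ ⊆ ⋃ u ∈ V, ⋃ w ∈ V, bad u w := by
    intro ω hω
    simp only [hgood, Set.mem_compl_iff, Set.mem_setOf_eq, not_forall] at hω
    obtain ⟨u, hu, w, hw, h⟩ := hω
    exact Set.mem_biUnion hu (Set.mem_biUnion hw h)
  have hbound : μ goodᶜ ≤ ENNReal.ofReal (1 / (n:ℝ)) := by
    calc μ goodᶜ ≤ μ (⋃ u ∈ V, ⋃ w ∈ V, bad u w) := measure_mono hcompl
      _ ≤ ∑ u ∈ V, μ (⋃ w ∈ V, bad u w) := measure_biUnion_finset_le V _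
      _ ≤ ∑ u ∈ V, ∑ w ∈ V, μ (bad u w) :=
          Finset.sum_le_sum (fun u _ => measure_biUnion_finset_le V _)
      _ ≤ ∑ u ∈ V, ∑ w ∈ V, ENNReal.ofReal ((n:ℝ) ^ (-3 : ℝ)) :=
          Finset.sum_le_sum (fun u _ => Finset.sum_le_sum (fun w _ => key u w))
      _ = (n : ENNReal) * ((n : ENNReal) * ENNReal.ofReal ((n:ℝ) ^ (-3 : ℝ))) := by
          simp [hn, mul_assoc]
      _ = ENNReal.ofReal (1 / (n:ℝ)) := by
          rw [← ENNReal.ofReal_natCast n, ← ENNReal.ofReal_mul hn0.le,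
            ← ENNReal.ofReal_mul hn0.le]
          congr 1
          rw [Real.rpow_neg hn0.le, show ((3:ℝ)) = ((3:ℕ):ℝ) by norm_num,
            Real.rpow_natCast]
          field_simp
  have h1n : ENNReal.ofReal (1 - 1 / (n:ℝ)) = 1 - ENNReal.ofReal (1 / (n:ℝ)) := by
    rw [ENNReal.ofReal_sub _ (by positivity), ENNReal.ofReal_one]
  rw [h1n, tsub_le_iff_right]
  calc (1 : ENNReal) = μ Set.univ := measure_univ.symm
    _ = μ (good ∪ goodᶜ) := by rw [Set.union_compl_self]
    _ ≤ μ good + μ goodᶜ := measure_union_le _ _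
    _ ≤ μ good + ENNReal.ofReal (1 / (n:ℝ)) := add_le_add_right hbound _
end

section
/- Let Z be a Fréchet random variable with shape p ≥ 1, and let v, q ∈ R^d with ‖v − q‖_p ≥ 2^k · c · (8 log₂ c · D ln D)^{1/p} for some c ≥ 4, D ≥ 2, and integer k ≥ 0. Then under the embedding f(x) = (x₁Z₁, …, x_d Z_d) with independent Fréchet Z_i of shape p, P[‖f(v) − f(q)‖_∞ ≤ c] ≤ D^{-2^{k+3} · log₂ c · D}. -/
open MeasureTheory ProbabilityTheory Real Finset

theorem frechet_far_point_contraction_bound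
    {Ω : Type*} [MeasurableSpace Ω] (μ : Measure Ω) [IsProbabilityMeasure μ]
    (p : ℝ) (hp : 1 ≤ p) (d : ℕ) (hd : 0 < d)
    (Z : Fin d → Ω → ℝ) (hZmeas : ∀ i, Measurable (Z i))
    (hindep : iIndepFun Z μ)
    (hcdf : ∀ i, ∀ x : ℝ, 0 < x →
      μ {ω | Z i ω ≤ x} = ENNReal.ofReal (Real.exp (-(x ^ (-p)))))
    (c D : ℝ) (hc : 4 ≤ c) (hD : 2 ≤ D) (k : ℕ)
    (v q : Fin d → ℝ)
    (hfar : 2 ^ k * c * (8 * Real.logb 2 c * D * Real.log D) ^ (1 / p)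
              ≤ (∑ i, |v i - q i| ^ p) ^ (1 / p)) :
    μ {ω | (⨆ i, |v i * Z i ω - q i * Z i ω|) ≤ c}
      ≤ ENNReal.ofReal (D ^ (-(2 ^ (k + 3) * Real.logb 2 c * D))) := by
  have hp0 : (0:ℝ) < p := lt_of_lt_of_le one_pos hp
  have hc0 : (0:ℝ) < c := by linarith
  have hD0 : (0:ℝ) < D := by linarith
  set Δ : Fin d → ℝ := fun i => |v i - q i| with hΔ
  have hΔ0 : ∀ i, 0 ≤ Δ i := fun i => abs_nonneg _
  -- rewrite the set as an intersection
  have hset : {ω | (⨆ i, |v i * Z i ω - q i * Z i ω|) ≤ c}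
      = ⋂ i, {ω | Δ i * |Z i ω| ≤ c} := by
    ext ω
    have habs : ∀ i, |v i * Z i ω - q i * Z i ω| = Δ i * |Z i ω| := by
      intro i; rw [← sub_mul, abs_mul]
    simp only [Set.mem_setOf_eq, Set.mem_iInter, habs]
    haveI : Nonempty (Fin d) := Fin.pos_iff_nonempty.mp hd
    exact ciSup_le_iff (Set.Finite.bddAbove (Set.finite_range _))
  rw [hset]
  -- independence
  have hprod : μ (⋂ i, {ω | Δ i * |Z i ω| ≤ c}) = ∏ i, μ {ω | Δ i * |Z i ω| ≤ c} := by
    apply hindep.meas_iInter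
    intro i
    refine ⟨{x | Δ i * |x| ≤ c}, ?_, rfl⟩
    exact measurableSet_le (by measurability) measurable_const
  rw [hprod]
  -- bound each factor
  have hfac : ∀ i, μ {ω | Δ i * |Z i ω| ≤ c}
      ≤ ENNReal.ofReal (Real.exp (-(Δ i ^ p * c ^ (-p)))) := by
    intro i
    rcases eq_or_lt_of_le (hΔ0 i) with h0 | h0
    · rw [← h0, Real.zero_rpow (ne_of_gt hp0), zero_mul, neg_zero, Real.exp_zero,
        ENNReal.ofReal_one]
      exact prob_le_one
    · have hca : 0 < c / Δ i := div_pos hc0 h0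
      have hsub : {ω | Δ i * |Z i ω| ≤ c} ⊆ {ω | Z i ω ≤ c / Δ i} := by
        intro ω hω
        simp only [Set.mem_setOf_eq] at hω ⊢
        calc Z i ω ≤ |Z i ω| := le_abs_self _
          _ ≤ c / Δ i := (le_div_iff₀' h0).mpr hω
      calc μ {ω | Δ i * |Z i ω| ≤ c} ≤ μ {ω | Z i ω ≤ c / Δ i} := measure_mono hsub
        _ = ENNReal.ofReal (Real.exp (-((c / Δ i) ^ (-p)))) := hcdf i _ hca
        _ = ENNReal.ofReal (Real.exp (-(Δ i ^ p * c ^ (-p)))) := by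
            congr 2
            rw [Real.rpow_neg hca.le, Real.div_rpow hc0.le (hΔ0 i), inv_div,
              div_eq_mul_inv, Real.rpow_neg hc0.le]
  -- the key arithmetic inequality
  have hlogb : 2 ≤ Real.logb 2 c := by
    rw [Real.le_logb_iff_rpow_le one_lt_two hc0]
    have h24 : (2:ℝ) ^ (2:ℝ) = 4 := by
      rw [show (2:ℝ) = ((2:ℕ):ℝ) by norm_num, Real.rpow_natCast]; norm_num
    linarith
  have hlogD : 0 < Real.log D := Real.log_pos (by linarith)
  have hB : 0 < 8 * Real.logb 2 c * D * Real.log D := by positivity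
  set B : ℝ := 8 * Real.logb 2 c * D * Real.log D with hBdef
  have hsum : (2:ℝ)^k * B ≤ (∑ i, Δ i ^ p) * c ^ (-p) := by
    have hA0 : 0 ≤ 2 ^ k * c * B ^ (1 / p) := by positivity
    have hT0 : 0 ≤ ∑ i, Δ i ^ p :=
      Finset.sum_nonneg fun i _ => Real.rpow_nonneg (hΔ0 i) _
    have h1 : (2 ^ k * c * B ^ (1 / p)) ^ p ≤ ∑ i, Δ i ^ p := by
      have := Real.rpow_le_rpow hA0 hfar hp0.le
      rwa [← Real.rpow_mul hT0, one_div_mul_cancel (ne_of_gt hp0),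
        Real.rpow_one] at this
    have h2 : (2 ^ k * c * B ^ (1 / p)) ^ p = (2:ℝ)^((k:ℝ)*p) * c ^ p * B := by
      rw [Real.mul_rpow (by positivity) (Real.rpow_nonneg hB.le _),
        Real.mul_rpow (by positivity) hc0.le, ← Real.rpow_mul hB.le,
        one_div_mul_cancel (ne_of_gt hp0), Real.rpow_one,
        ← Real.rpow_natCast (2:ℝ) k, ← Real.rpow_mul (by norm_num)]
    have h3 : (2:ℝ)^(k:ℕ) ≤ (2:ℝ)^((k:ℝ)*p) := by
      rw [← Real.rpow_natCast (2:ℝ) k]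
      apply Real.rpow_le_rpow_of_exponent_le one_le_two
      nlinarith [Nat.cast_nonneg (α := ℝ) k]
    have h4 : (2:ℝ)^((k:ℝ)*p) * c ^ p * B ≤ ∑ i, Δ i ^ p := h2 ▸ h1
    have hcp : (0:ℝ) < c ^ p := Real.rpow_pos_of_pos hc0 _
    have hcpn : c ^ (-p) = (c ^ p)⁻¹ := by
      rw [Real.rpow_neg hc0.le]
    rw [hcpn, ← div_eq_mul_inv, le_div_iff₀ hcp]
    calc (2:ℝ)^k * B * c ^ p ≤ (2:ℝ)^((k:ℝ)*p) * B * c ^ p :=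
        mul_le_mul_of_nonneg_right (mul_le_mul_of_nonneg_right h3 hB.le) hcp.le
      _ = (2:ℝ)^((k:ℝ)*p) * c ^ p * B := by ring
      _ ≤ ∑ i, Δ i ^ p := h4
  calc ∏ i, μ {ω | Δ i * |Z i ω| ≤ c}
      ≤ ∏ i, ENNReal.ofReal (Real.exp (-(Δ i ^ p * c ^ (-p)))) :=
        Finset.prod_le_prod' fun i _ => hfac i
    _ = ENNReal.ofReal (Real.exp (-((∑ i, Δ i ^ p) * c ^ (-p)))) := by
        rw [← ENNReal.ofReal_prod_of_nonneg (fun i _ => (Real.exp_nonneg _)),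
          ← Real.exp_sum]
        congr 2
        rw [Finset.sum_neg_distrib, ← Finset.sum_mul]
    _ ≤ ENNReal.ofReal (D ^ (-(2 ^ (k + 3) * Real.logb 2 c * D))) := by
        apply ENNReal.ofReal_le_ofReal
        rw [Real.rpow_def_of_pos hD0, Real.exp_le_exp]
        have : Real.log D * -(2 ^ (k + 3) * Real.logb 2 c * D) = -((2:ℝ)^k * B) := by
          rw [hBdef, pow_add]; ring
        rw [this, neg_le_neg_iff]
        exact hsum
end

section
/- Let 1 ≤ q < p < ∞ and C > 0, and let x, y ∈ R^d satisfy ‖x‖_p ≤ C and ‖y‖_p ≤ C. Define the scaled Mazur map M(v)_i = (q/(p·C^{p/q−1})) · |v_i|^{p/q} for each coordinate i. Then ‖M(x) − M(y)‖_q ≤ ‖x − y‖_p (the scaled Mazur map is non-expansive). -/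
open Finset Real MeasureTheory intervalIntegral

lemma contL (b d : ℝ) {e : ℝ} (he : 0 < e) :
    Continuous fun s : ℝ => (b + s * d) ^ e := by
  have h1 : Continuous fun t : ℝ => t ^ e :=
    continuous_iff_continuousAt.mpr fun t => Real.continuousAt_rpow_const t e (Or.inr he.le)
  exact h1.comp (by continuity)

lemma contLabs (b d : ℝ) {e : ℝ} (he : 0 < e) :
    Continuous fun s : ℝ => |b + s * d| ^ e := by
  have h1 : Continuous fun t : ℝ => t ^ e :=
    continuous_iff_continuousAt.mpr fun t => Real.continuousAt_rpow_const t e (Or.inr he.le)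
  exact h1.comp (by continuity)

lemma ftc_rpow {r : ℝ} (hr : 1 < r) (a b : ℝ) :
    a ^ r - b ^ r = ∫ s in (0:ℝ)..1, r * (b + s * (a - b)) ^ (r - 1) * (a - b) := by
  have hderiv : ∀ s ∈ Set.uIcc (0:ℝ) 1,
      HasDerivAt (fun s : ℝ => (b + s * (a - b)) ^ r)
        (r * (b + s * (a - b)) ^ (r - 1) * (a - b)) s := by
    intro s _
    have h1 : HasDerivAt (fun s : ℝ => b + s * (a - b)) (a - b) s := by
      simpa using ((hasDerivAt_id s).mul_const (a - b)).const_add b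
    have h2 := Real.hasDerivAt_rpow_const (x := b + s * (a - b)) (p := r) (Or.inr hr.le)
    simpa [mul_assoc, Function.comp_def] using h2.comp s h1
  have hcont : Continuous fun s : ℝ => r * (b + s * (a - b)) ^ (r - 1) * (a - b) :=
    ((continuous_const.mul (contL b (a - b) (by linarith))).mul continuous_const)
  rw [integral_eq_sub_of_hasDerivAt hderiv (hcont.intervalIntegrable 0 1)]
  norm_num

lemma jensen_rpow {q : ℝ} (hq : 1 ≤ q) (φ : ℝ → ℝ) (hφ : Continuous φ) (h0 : ∀ s, 0 ≤ φ s) :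
    (∫ s in (0:ℝ)..1, φ s) ^ q ≤ ∫ s in (0:ℝ)..1, φ s ^ q := by
  have hcq : Continuous fun t : ℝ => t ^ q :=
    continuous_iff_continuousAt.mpr fun t =>
      Real.continuousAt_rpow_const t q (Or.inr (by linarith))
  rw [intervalIntegral.integral_of_le zero_le_one, intervalIntegral.integral_of_le zero_le_one]
  have hprob : IsProbabilityMeasure (volume.restrict (Set.Ioc (0:ℝ) 1)) := by
    constructor
    simp [Real.volume_Ioc]
  have hconv : ConvexOn ℝ (Set.Ici 0) fun t : ℝ => t ^ q := convexOn_rpow hq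
  have h := hconv.map_integral_le (μ := volume.restrict (Set.Ioc (0:ℝ) 1))
    (f := φ) hcq.continuousOn isClosed_Ici
    (Filter.Eventually.of_forall fun s => h0 s)
    (hφ.integrableOn_Ioc) ((hcq.comp hφ).integrableOn_Ioc)
  exact h

lemma key_scalar {r q : ℝ} (hr : 1 < r) (hq : 1 ≤ q) (a b : ℝ) :
    |a ^ r - b ^ r| ^ q ≤
      r ^ q * |a - b| ^ q * ∫ s in (0:ℝ)..1, |b + s * (a - b)| ^ ((r - 1) * q) := by
  have hr0 : (0:ℝ) < r - 1 := by linarith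
  set φ : ℝ → ℝ := fun s => |b + s * (a - b)| ^ (r - 1) with hφdef
  have hφc : Continuous φ := by
    have h1 : Continuous fun t : ℝ => t ^ (r - 1) :=
      continuous_iff_continuousAt.mpr fun t =>
        Real.continuousAt_rpow_const t (r - 1) (Or.inr hr0.le)
    exact h1.comp (by continuity)
  have hφ0 : ∀ s, 0 ≤ φ s := fun s => Real.rpow_nonneg (abs_nonneg _) _
  have hint : IntervalIntegrable φ volume 0 1 := hφc.intervalIntegrable 0 1
  have step1 : |a ^ r - b ^ r| ≤ r * |a - b| * ∫ s in (0:ℝ)..1, φ s := by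
    rw [ftc_rpow hr a b]
    refine (intervalIntegral.abs_integral_le_integral_abs zero_le_one).trans ?_
    have hmono : (∫ s in (0:ℝ)..1, |r * (b + s * (a - b)) ^ (r - 1) * (a - b)|) ≤
        ∫ s in (0:ℝ)..1, r * |a - b| * φ s := by
      apply intervalIntegral.integral_mono_on zero_le_one
      · exact (((continuous_const.mul (contL b (a - b) hr0)).mul
          continuous_const).abs).intervalIntegrable 0 1
      · exact ((continuous_const.mul hφc)).intervalIntegrable 0 1
      · intro s _
        rw [abs_mul, abs_mul, abs_of_nonneg (by linarith : (0:ℝ) ≤ r)]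
        have : |(b + s * (a - b)) ^ (r - 1)| ≤ φ s := Real.abs_rpow_le_abs_rpow _ _
        calc r * |(b + s * (a - b)) ^ (r - 1)| * |a - b|
            ≤ r * φ s * |a - b| := by gcongr
          _ = r * |a - b| * φ s := by ring
    refine hmono.trans ?_
    rw [intervalIntegral.integral_const_mul]
  have hq0 : (0:ℝ) < q := by linarith
  have hI0 : 0 ≤ ∫ s in (0:ℝ)..1, φ s :=
    intervalIntegral.integral_nonneg zero_le_one fun s _ => hφ0 s
  have step2 : |a ^ r - b ^ r| ^ q ≤ (r * |a - b| * ∫ s in (0:ℝ)..1, φ s) ^ q :=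
    Real.rpow_le_rpow (abs_nonneg _) step1 hq0.le
  refine step2.trans ?_
  rw [Real.mul_rpow (by positivity) hI0, Real.mul_rpow (by positivity) (abs_nonneg _)]
  have jensen := jensen_rpow hq φ hφc hφ0
  have hrw : (∫ s in (0:ℝ)..1, φ s ^ q) = ∫ s in (0:ℝ)..1, |b + s * (a - b)| ^ ((r - 1) * q) := by
    congr 1
    funext s
    rw [hφdef, ← Real.rpow_mul (abs_nonneg _)]
  rw [hrw] at jensen
  gcongr

lemma rpow_one_div_le {X C p : ℝ} (hX : 0 ≤ X) (hp : 0 < p) (h : X ^ (1/p) ≤ C) :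
    X ≤ C ^ p := by
  calc X = (X ^ (1/p)) ^ p := by
        rw [← Real.rpow_mul hX, one_div, inv_mul_cancel₀ hp.ne', Real.rpow_one]
    _ ≤ C ^ p := Real.rpow_le_rpow (Real.rpow_nonneg hX _) h hp.le

theorem mazur_map_nonexpansive
    (d : ℕ) (p q C : ℝ) (hq : 1 ≤ q) (hpq : q < p) (hC : 0 < C)
    (x y : Fin d → ℝ)
    (hx : (∑ i, |x i| ^ p) ^ (1 / p) ≤ C)
    (hy : (∑ i, |y i| ^ p) ^ (1 / p) ≤ C)
    (M : (Fin d → ℝ) → (Fin d → ℝ))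
    (hM : ∀ v i, M v i = (q / (p * C ^ (p / q - 1))) * |v i| ^ (p / q)) :
    (∑ i, |M x i - M y i| ^ q) ^ (1 / q) ≤ (∑ i, |x i - y i| ^ p) ^ (1 / p) := by
  have hq0 : (0:ℝ) < q := by linarith
  have hp0 : (0:ℝ) < p := by linarith
  have hpq0 : (0:ℝ) < p - q := by linarith
  set Sd : ℝ := ∑ i, |x i - y i| ^ p with hSd
  have hSd0 : 0 ≤ Sd := Finset.sum_nonneg fun i _ => Real.rpow_nonneg (abs_nonneg _) _
  -- per-s Hölder bound
  have hconj : Real.HolderConjugate (p/(p-q)) (p/q) := by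
    rw [Real.holderConjugate_iff]
    constructor
    · rw [lt_div_iff₀ hpq0]; linarith
    · rw [inv_div, inv_div]; field_simp; ring
  -- Minkowski: ∑ |b i + s*(|x i| - |y i|)|^p ≤ C^p for s ∈ [0,1]
  have minkow : ∀ s ∈ Set.Icc (0:ℝ) 1, (∑ i, |(|y i| + s * (|x i| - |y i|))| ^ p) ≤ C ^ p := by
    intro s hs
    obtain ⟨hs0, hs1⟩ := hs
    have habs : ∀ i : Fin d, |(|y i| + s * (|x i| - |y i|))| = (1-s) * |y i| + s * |x i| := by
      intro i
      have hL0 : 0 ≤ (1-s) * |y i| + s * |x i| :=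
        add_nonneg (mul_nonneg (by linarith) (abs_nonneg _)) (mul_nonneg hs0 (abs_nonneg _))
      rw [show |y i| + s * (|x i| - |y i|) = (1-s) * |y i| + s * |x i| by ring, abs_of_nonneg hL0]
    have hsum : (∑ i, |(|y i| + s * (|x i| - |y i|))| ^ p) = ∑ i, ((1-s) * |y i| + s * |x i|) ^ p := by
      refine Finset.sum_congr rfl fun i _ => by rw [habs i]
    rw [hsum]
    have hmk := Real.Lp_add_le_of_nonneg (Finset.univ)
      (f := fun i => (1-s) * |y i|) (g := fun i => s * |x i|) (by linarith : 1 ≤ p)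
      (fun i _ => mul_nonneg (by linarith) (abs_nonneg _))
      (fun i _ => mul_nonneg hs0 (abs_nonneg _))
    have e1 : (∑ i, ((1-s) * |y i|) ^ p) ^ (1/p) = (1-s) * (∑ i, |y i| ^ p) ^ (1/p) := by
      have : ∀ i : Fin d, ((1-s) * |y i|) ^ p = (1-s) ^ p * |y i| ^ p := fun i =>
        Real.mul_rpow (by linarith) (abs_nonneg _)
      rw [Finset.sum_congr rfl fun i _ => this i, ← Finset.mul_sum,
        Real.mul_rpow (Real.rpow_nonneg (by linarith) _)
          (Finset.sum_nonneg fun i _ => Real.rpow_nonneg (abs_nonneg _) _),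
        ← Real.rpow_mul (by linarith), mul_one_div, div_self hp0.ne', Real.rpow_one]
    have e2 : (∑ i, (s * |x i|) ^ p) ^ (1/p) = s * (∑ i, |x i| ^ p) ^ (1/p) := by
      have : ∀ i : Fin d, (s * |x i|) ^ p = s ^ p * |x i| ^ p := fun i =>
        Real.mul_rpow hs0 (abs_nonneg _)
      rw [Finset.sum_congr rfl fun i _ => this i, ← Finset.mul_sum,
        Real.mul_rpow (Real.rpow_nonneg hs0 _)
          (Finset.sum_nonneg fun i _ => Real.rpow_nonneg (abs_nonneg _) _),
        ← Real.rpow_mul hs0, mul_one_div, div_self hp0.ne', Real.rpow_one]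
    rw [e1, e2] at hmk
    have hfin : (∑ i, ((1-s) * |y i| + s * |x i|) ^ p) ^ (1/p) ≤ C := by
      refine hmk.trans ?_
      have h1 : (1-s) * (∑ i, |y i| ^ p) ^ (1/p) ≤ (1-s) * C :=
        mul_le_mul_of_nonneg_left hy (by linarith)
      have h2 : s * (∑ i, |x i| ^ p) ^ (1/p) ≤ s * C :=
        mul_le_mul_of_nonneg_left hx hs0
      linarith
    refine rpow_one_div_le (Finset.sum_nonneg fun i _ => Real.rpow_nonneg ?_ _) hp0 hfin
    exact add_nonneg (mul_nonneg (by linarith) (abs_nonneg _)) (mul_nonneg hs0 (abs_nonneg _))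
  -- per-s Hölder bound
  have hSdle : (∑ i, |(|x i| - |y i|)| ^ p) ≤ Sd := by
    refine Finset.sum_le_sum fun i _ => ?_
    exact Real.rpow_le_rpow (abs_nonneg _) (abs_abs_sub_abs_le_abs_sub _ _) hp0.le
  have perS : ∀ s ∈ Set.Icc (0:ℝ) 1,
      (∑ i, |(|x i| - |y i|)| ^ q * |(|y i| + s * (|x i| - |y i|))| ^ (p - q))
        ≤ C ^ (p - q) * Sd ^ (q/p) := by
    intro s hs
    have hold := Real.inner_le_Lp_mul_Lq_of_nonneg (Finset.univ) (p := p/(p-q)) (q := p/q)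
      (f := fun i => |(|y i| + s * (|x i| - |y i|))| ^ (p - q))
      (g := fun i => |(|x i| - |y i|)| ^ q) hconj
      (fun i _ => Real.rpow_nonneg (abs_nonneg _) _)
      (fun i _ => Real.rpow_nonneg (abs_nonneg _) _)
    have e1 : ∀ i : Fin d, (|(|y i| + s * (|x i| - |y i|))| ^ (p - q)) ^ (p/(p-q))
        = |(|y i| + s * (|x i| - |y i|))| ^ p := by
      intro i
      rw [← Real.rpow_mul (abs_nonneg _)]
      congr 1
      field_simp
    have e2 : ∀ i : Fin d, (|(|x i| - |y i|)| ^ q) ^ (p/q) = |(|x i| - |y i|)| ^ p := by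
      intro i
      rw [← Real.rpow_mul (abs_nonneg _)]
      congr 1
      field_simp
    rw [Finset.sum_congr rfl (fun i _ => e1 i), Finset.sum_congr rfl (fun i _ => e2 i)] at hold
    have hrw : ∀ i : Fin d, |(|y i| + s * (|x i| - |y i|))| ^ (p - q) * |(|x i| - |y i|)| ^ q
        = |(|x i| - |y i|)| ^ q * |(|y i| + s * (|x i| - |y i|))| ^ (p - q) := fun i => mul_comm _ _
    rw [Finset.sum_congr rfl (fun i _ => hrw i)] at hold
    refine hold.trans ?_
    have f1 : (∑ i, |(|y i| + s * (|x i| - |y i|))| ^ p) ^ (1/(p/(p-q))) ≤ C ^ (p - q) := by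
      rw [one_div_div]
      calc (∑ i, |(|y i| + s * (|x i| - |y i|))| ^ p) ^ ((p-q)/p)
          ≤ (C ^ p) ^ ((p-q)/p) := by
            refine Real.rpow_le_rpow
              (Finset.sum_nonneg fun i _ => Real.rpow_nonneg (abs_nonneg _) _)
              (minkow s hs) (div_nonneg hpq0.le hp0.le)
        _ = C ^ (p - q) := by
            rw [← Real.rpow_mul hC.le]
            congr 1
            field_simp
    have f2 : (∑ i, |(|x i| - |y i|)| ^ p) ^ (1/(p/q)) ≤ Sd ^ (q/p) := by
      rw [one_div_div]
      exact Real.rpow_le_rpow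
        (Finset.sum_nonneg fun i _ => Real.rpow_nonneg (abs_nonneg _) _) hSdle (div_nonneg hq0.le hp0.le)
    exact mul_le_mul f1 f2 (Real.rpow_nonneg
      (Finset.sum_nonneg fun i _ => Real.rpow_nonneg (abs_nonneg _) _) _)
      (Real.rpow_nonneg hC.le _)
  -- notation
  set r : ℝ := p / q with hrdef
  set c : ℝ := q / (p * C ^ (p / q - 1)) with hcdef
  have hr : 1 < r := (one_lt_div hq0).mpr hpq
  have hr0 : (0:ℝ) < r := by linarith
  have hCe : (0:ℝ) < C ^ (p / q - 1) := Real.rpow_pos_of_pos hC _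
  have hc0 : (0:ℝ) < c := by
    rw [hcdef]; positivity
  have hexp : (r - 1) * q = p - q := by
    rw [hrdef]; field_simp
  -- the integrand functions
  set F : Fin d → ℝ → ℝ := fun i s =>
    |(|x i| - |y i|)| ^ q * |(|y i|) + s * (|x i| - |y i|)| ^ (p - q) with hFdef
  have hFcont : ∀ i : Fin d, Continuous (F i) := fun i =>
    continuous_const.mul (contLabs _ _ hpq0)
  have hFint : ∀ i : Fin d, IntervalIntegrable (F i) volume 0 1 := fun i =>
    (hFcont i).intervalIntegrable 0 1
  -- step 1 : pointwise key bound
  have step1 : (∑ i, |M x i - M y i| ^ q) ≤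
      c ^ q * r ^ q * ∑ i, ∫ s in (0:ℝ)..1, F i s := by
    have hMi : ∀ i : Fin d, |M x i - M y i| ^ q =
        c ^ q * |(|x i|) ^ r - (|y i|) ^ r| ^ q := by
      intro i
      have : M x i - M y i = c * ((|x i|) ^ r - (|y i|) ^ r) := by
        rw [hM, hM, hrdef, hcdef]; ring
      rw [this, abs_mul, abs_of_nonneg hc0.le, Real.mul_rpow hc0.le (abs_nonneg _)]
    calc (∑ i, |M x i - M y i| ^ q)
        = ∑ i, c ^ q * |(|x i|) ^ r - (|y i|) ^ r| ^ q :=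
          Finset.sum_congr rfl fun i _ => hMi i
      _ ≤ ∑ i, c ^ q * (r ^ q * ∫ s in (0:ℝ)..1, F i s) := by
          refine Finset.sum_le_sum fun i _ => ?_
          refine mul_le_mul_of_nonneg_left ?_ (Real.rpow_nonneg hc0.le _)
          have key := key_scalar hr hq (|x i|) (|y i|)
          rw [hexp] at key
          refine key.trans (le_of_eq ?_)
          rw [mul_assoc, ← intervalIntegral.integral_const_mul]
      _ = c ^ q * r ^ q * ∑ i, ∫ s in (0:ℝ)..1, F i s := by
          rw [← Finset.mul_sum, ← Finset.mul_sum, mul_assoc]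
  -- step 2 : swap sum and integral, bound via perS
  have step2 : (∑ i, ∫ s in (0:ℝ)..1, F i s) ≤ C ^ (p - q) * Sd ^ (q / p) := by
    rw [← intervalIntegral.integral_finset_sum (fun i _ => hFint i)]
    have hmono : (∫ s in (0:ℝ)..1, ∑ i, F i s) ≤
        ∫ _ in (0:ℝ)..1, (C ^ (p - q) * Sd ^ (q / p)) := by
      refine intervalIntegral.integral_mono_on zero_le_one
        ((continuous_finset_sum _ fun i _ => hFcont i).intervalIntegrable 0 1)
        (intervalIntegrable_const) (fun s hs => perS s hs)
    refine hmono.trans (le_of_eq ?_)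
    simp
  -- step 3 : the constant collapses
  have hconst : c ^ q * r ^ q * C ^ (p - q) = 1 := by
    have hcr : c * r = C ^ (-(p / q - 1)) := by
      rw [Real.rpow_neg hC.le, hcdef, hrdef]
      field_simp
    rw [← Real.mul_rpow hc0.le hr0.le, hcr, ← Real.rpow_mul hC.le, ← Real.rpow_add hC,
      show -(p / q - 1) * q + (p - q) = 0 by field_simp; ring, Real.rpow_zero]
  have main : (∑ i, |M x i - M y i| ^ q) ≤ Sd ^ (q / p) := by
    calc (∑ i, |M x i - M y i| ^ q)
        ≤ c ^ q * r ^ q * ∑ i, ∫ s in (0:ℝ)..1, F i s := step1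
      _ ≤ c ^ q * r ^ q * (C ^ (p - q) * Sd ^ (q / p)) := by
          refine mul_le_mul_of_nonneg_left step2 ?_
          positivity
      _ = (c ^ q * r ^ q * C ^ (p - q)) * Sd ^ (q / p) := by ring
      _ = Sd ^ (q / p) := by rw [hconst, one_mul]
  -- final
  have hA0 : 0 ≤ ∑ i, |M x i - M y i| ^ q :=
    Finset.sum_nonneg fun i _ => Real.rpow_nonneg (abs_nonneg _) _
  calc (∑ i, |M x i - M y i| ^ q) ^ (1 / q)
      ≤ (Sd ^ (q / p)) ^ (1 / q) :=
        Real.rpow_le_rpow hA0 main (by positivity)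
    _ = Sd ^ (1 / p) := by
        rw [← Real.rpow_mul hSd0]
        congr 1
        field_simp
end
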